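/- Let p be a prime dividing n. The Gram matrix of the np-th cyclotomic Vandermonde matrix satisfies M†_{Φ_{np}} M_{Φ_{np}} = p · (M†_{Φ_n} M_{Φ_n}) ⊗ I_p, where ⊗ denotes the Kronecker product and I_p the p×p identity. -/

import Mathlib

open Finset Matrix Kronecker

/-! Write `k ∈ [1, np]` as `k = a + tn` with `a ∈ [1, n]`, `t < p`. Since `p ∣ n`, `k` is
prime to `np` iff `a` is prime to `n`, so with `e(x) = exp(2πix)` the Ramanujan sum factors as
`c_{np}(m) = (∑_a e(am/np)) · ∑_{t<p} e(tm/p)`, and the geometric sum is `p` or `0` according as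
`p ∣ m`. Hence `c_{np}(i - j)` vanishes unless `i ≡ j (mod p)`, and then equals
`p · c_n(i / p - j / p)`, the `(i, j)` entry of `p · (M†M ⊗ I_p)` under `i ↦ (i / p, i % p)`. -/

/-- The Ramanujan sum `c_n(m) = Σ_{gcd(k,n)=1, 1≤k≤n} exp(2πi·k·m/n)`. -/
noncomputable def ramanujanSum (n : ℕ) (m : ℤ) : ℂ :=
  ∑ k ∈ (Icc 1 n).filter (fun k => Nat.Coprime k n),
    Complex.exp (2 * Real.pi * Complex.I * (k : ℂ) * (m : ℂ) / (n : ℂ))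

/-- The Gram matrix `M†M` of the Vandermonde matrix of the primitive `n`-th roots
of unity; its `(i,j)` entry is the Ramanujan sum `c_n(i-j)`. -/
noncomputable def cycGram (n : ℕ) : Matrix (Fin n.totient) (Fin n.totient) ℂ :=
  fun i j => ramanujanSum n ((i : ℤ) - (j : ℤ))

theorem sum_range_exp_eq_ite {p : ℕ} (hp : p ≠ 0) (m : ℤ) :
    ∑ t ∈ range p, Complex.exp (2 * Real.pi * Complex.I * t * m / p) =
      if (p : ℤ) ∣ m then (p : ℂ) else 0 := by
  set ζ := Complex.exp (2 * Real.pi * Complex.I / p)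
  have hζ : IsPrimitiveRoot ζ p := Complex.isPrimitiveRoot_exp p hp
  have hpow (t : ℕ) : Complex.exp (2 * Real.pi * Complex.I * t * m / p) = (ζ ^ m) ^ t := by
    rw [← zpow_natCast, ← _root_.zpow_mul, ← Complex.exp_int_mul]
    push_cast
    ring_nf
  simp only [hpow]
  split_ifs with hdvd
  · simp [(hζ.zpow_eq_one_iff_dvd m).2 hdvd]
  · have hne : ζ ^ m ≠ 1 := fun h => hdvd ((hζ.zpow_eq_one_iff_dvd m).1 h)
    rw [geom_sum_eq hne, ← zpow_natCast, ← _root_.zpow_mul, mul_comm, _root_.zpow_mul,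
      zpow_natCast, hζ.pow_eq_one, _root_.one_zpow, sub_self, zero_div]

theorem sum_Icc_one_mul_eq_sum_range_sum_Icc_one {M : Type*} [AddCommMonoid M]
    (f : ℕ → M) (n p : ℕ) :
    ∑ k ∈ Icc 1 (n * p), f k = ∑ t ∈ range p, ∑ a ∈ Icc 1 n, f (a + t * n) := by
  have hIcc (N : ℕ) : Icc 1 N = Ioc 0 N := Icc_add_one_left_eq_Ioc 0 N
  simp only [hIcc]
  induction p with
  | zero => simp
  | succ p ih =>
    rw [sum_range_succ, ← ih, Nat.mul_succ, ← sum_Ioc_consecutive f (Nat.zero_le _)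
      (Nat.le_add_right _ n), mul_comm p n]
    congr 1
    simpa [add_comm n] using sum_map (Ioc 0 n) (addRightEmbedding (n * p)) f

theorem Nat.coprime_mul_iff_right_of_dvd {k n p : ℕ} (hpn : p ∣ n) :
    k.Coprime (n * p) ↔ k.Coprime n :=
  ⟨fun h => h.coprime_mul_right_right, fun h => h.mul_right (h.coprime_dvd_right hpn)⟩

theorem ramanujanSum_mul_of_dvd {n p : ℕ} (hn : 0 < n) (hpn : p ∣ n) (m : ℤ) :
    ramanujanSum (n * p) m = if (p : ℤ) ∣ m then p * ramanujanSum n (m / p) else 0 := by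
  have hp : p ≠ 0 := (Nat.pos_of_dvd_of_pos hpn hn).ne'
  have hn' : (n : ℂ) ≠ 0 := by exact_mod_cast hn.ne'
  set e : ℕ → ℂ := fun a => Complex.exp (2 * Real.pi * Complex.I * a * m / (n * p : ℕ))
  have hsplit (a t : ℕ) :
      Complex.exp (2 * Real.pi * Complex.I * (a + t * n : ℕ) * m / (n * p : ℕ)) =
        e a * Complex.exp (2 * Real.pi * Complex.I * t * m / p) := by
    rw [← Complex.exp_add]
    congr 1
    push_cast
    field_simp
  calc ramanujanSum (n * p) m
      = ∑ k ∈ Icc 1 (n * p), if k.Coprime n then e k else 0 := by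
        simp only [ramanujanSum, Nat.coprime_mul_iff_right_of_dvd hpn, ← sum_filter, e]
    _ = ∑ t ∈ range p, ∑ a ∈ Icc 1 n,
          if a.Coprime n then e a * Complex.exp (2 * Real.pi * Complex.I * t * m / p) else 0 := by
        simp only [sum_Icc_one_mul_eq_sum_range_sum_Icc_one, Nat.coprime_add_mul_right_left, e,
          hsplit]
    _ = (∑ a ∈ (Icc 1 n).filter (·.Coprime n), e a) *
          ∑ t ∈ range p, Complex.exp (2 * Real.pi * Complex.I * t * m / p) := by
        rw [sum_comm, sum_filter, sum_mul]
        simp only [ite_zero_mul, mul_sum]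
    _ = if (p : ℤ) ∣ m then p * ramanujanSum n (m / p) else 0 := by
        rw [sum_range_exp_eq_ite hp]
        split_ifs with hdvd
        · obtain ⟨q, rfl⟩ := hdvd
          rw [Int.mul_ediv_cancel_left q (by exact_mod_cast hp), mul_comm, ramanujanSum]
          congr 1
          refine sum_congr rfl fun a _ => ?_
          simp only [e]
          congr 1
          push_cast
          field_simp
        · rw [mul_zero]

theorem Nat.ModEq.cast_sub_eq_mul_sub_div {a b p : ℕ} (h : a ≡ b [MOD p]) :
    (a : ℤ) - b = p * ((a / p : ℕ) - (b / p : ℕ) : ℤ) := by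
  have ha := Nat.mod_add_div a p
  have hb := Nat.mod_add_div b p
  unfold Nat.ModEq at h
  zify at ha hb h
  push_cast
  linear_combination hb - ha + h

theorem cycGram_mul_prime_kronecker_general (n p : ℕ)
    (hpn : p ∣ n) (h : Nat.totient (n * p) = Nat.totient n * p) :
    ∀ i j : Fin (Nat.totient (n * p)),
      cycGram (n * p) i j =
        (p : ℂ) * (cycGram n ⊗ₖ (1 : Matrix (Fin p) (Fin p) ℂ))
          (finProdFinEquiv.symm (Fin.cast h i)) (finProdFinEquiv.symm (Fin.cast h j)) := by
  intro i j
  obtain ⟨hn, hp⟩ : 0 < n ∧ 0 < p := CanonicallyOrderedAdd.mul_pos.1 (Nat.totient_pos.1 i.pos)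
  have hmod : (Fin.cast h i).modNat = (Fin.cast h j).modNat ↔ (p : ℤ) ∣ (i : ℤ) - j := by
    rw [Fin.ext_iff, Fin.coe_modNat, Fin.coe_modNat]
    exact Nat.ModEq.comm.trans Nat.modEq_iff_dvd
  simp only [cycGram, kroneckerMap_apply, finProdFinEquiv_symm_apply, Fin.coe_divNat, Fin.val_cast,
    one_apply, mul_ite, mul_one, mul_zero, ramanujanSum_mul_of_dvd hn hpn, hmod]
  split_ifs with hdvd
  · rw [(Nat.modEq_iff_dvd.2 hdvd).symm.cast_sub_eq_mul_sub_div,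
      Int.mul_ediv_cancel_left _ (by exact_mod_cast hp.ne')]
  · rfl

/-- For a prime `p` dividing `n`, the Gram matrix of the `np`-th cyclotomic
Vandermonde matrix is `p · (M†_{Φ_n} M_{Φ_n}) ⊗ I_p` (under the canonical
identification `Fin (φ(np)) ≃ Fin (φ(n)) × Fin p`, using `φ(np) = φ(n)·p`). -/
theorem cycGram_mul_prime_kronecker (n p : ℕ) (hn : 0 < n) (hp : p.Prime)
    (hpn : p ∣ n) (h : Nat.totient (n * p) = Nat.totient n * p) :
    ∀ i j : Fin (Nat.totient (n * p)),
      cycGram (n * p) i j =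
        (p : ℂ) * (cycGram n ⊗ₖ (1 : Matrix (Fin p) (Fin p) ℂ))
          (finProdFinEquiv.symm (Fin.cast h i)) (finProdFinEquiv.symm (Fin.cast h j)) :=
  cycGram_mul_prime_kronecker_general n p hpn h
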